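/- arXiv:1209.4251 — 2 statements merged into one kernel-verified Lean document; each statement's English description precedes it below -/
import Mathlib

section
/- (Two-dimensional entropy circulation conservation.) Let u : ℝ × ℝ² → ℝ² and g, h, S : ℝ × ℝ² → ℝ be smooth with ∂ₜu + (u·∇)u = ∇g + h∇S and ∂ₜS + ⟨u, ∇S⟩ = 0 everywhere, and suppose there is R > 0 such that for all t and all x with ‖x‖ ≥ R one has u(t,x) = 0 and ∇S(t,x) = 0. Let ϖ = ∂₁u² − ∂₂u¹ be the scalar vorticity. Then for every continuously differentiable f : ℝ → ℝ, the integral t ↦ ∫_{ℝ²} f(S(t,x)) ϖ(t,x) dx is constant. -/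
open scoped RealInnerProductSpace

/-- The scalar vorticity `ϖ = ∂₁u² − ∂₂u¹` of a time-dependent planar velocity field. -/
noncomputable def vortScalar2
    (u : ℝ × EuclideanSpace ℝ (Fin 2) → EuclideanSpace ℝ (Fin 2))
    (t : ℝ) (x : EuclideanSpace ℝ (Fin 2)) : ℝ :=
  fderiv ℝ (fun y => u (t, y)) x (EuclideanSpace.single 0 1) 1
    - fderiv ℝ (fun y => u (t, y)) x (EuclideanSpace.single 1 1) 0

noncomputable section
namespace ECC

abbrev E2 : Type := EuclideanSpace ℝ (Fin 2)
abbrev P2 : Type := ℝ × E2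

/-- directional derivative operator on functions `P2 → ℝ`. -/
def DD (v : P2) (φ : P2 → ℝ) : P2 → ℝ := fun p => fderiv ℝ φ p v

lemma contDiff_DD {φ : P2 → ℝ} (hφ : ContDiff ℝ (⊤ : ℕ∞) φ) (v : P2) :
    ContDiff ℝ (⊤ : ℕ∞) (DD v φ) := by
  have h1 : ContDiff ℝ (⊤ : ℕ∞) (fun p => fderiv ℝ φ p) := hφ.fderiv_right (by simp)
  exact (ContinuousLinearMap.apply ℝ ℝ v).contDiff.comp h1

lemma DD_add {φ ψ : P2 → ℝ} (hφ : Differentiable ℝ φ) (hψ : Differentiable ℝ ψ) (v : P2) :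
    DD v (fun p => φ p + ψ p) = fun p => DD v φ p + DD v ψ p := by
  funext p
  simp [DD, fderiv_fun_add (hφ p) (hψ p)]

lemma DD_mul {φ ψ : P2 → ℝ} (hφ : Differentiable ℝ φ) (hψ : Differentiable ℝ ψ) (v : P2) :
    DD v (fun p => φ p * ψ p) = fun p => φ p * DD v ψ p + ψ p * DD v φ p := by
  funext p
  simp [DD, fderiv_fun_mul (hφ p) (hψ p)]

lemma DD_swap {φ : P2 → ℝ} (hφ : ContDiff ℝ (⊤ : ℕ∞) φ) (v w : P2) :
    DD v (DD w φ) = DD w (DD v φ) := by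
  funext p
  have hd : ∀ q : P2, HasFDerivAt φ (fderiv ℝ φ q) q := fun q =>
    (hφ.differentiable (by simp) q).hasFDerivAt
  have h2 : Differentiable ℝ (fun q => fderiv ℝ φ q) :=
    (hφ.fderiv_right (m := (⊤ : ℕ∞)) (by simp)).differentiable (by simp)
  have hsymm := second_derivative_symmetric hd (h2 p).hasFDerivAt
  have expand : ∀ (z w : P2), DD z (DD w φ) p = (fderiv ℝ (fderiv ℝ φ) p z) w := by
    intro z w
    have : DD w φ = fun q => (ContinuousLinearMap.apply ℝ ℝ w) (fderiv ℝ φ q) := rfl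
    have hc := ((ContinuousLinearMap.apply ℝ ℝ w).hasFDerivAt.comp p (h2 p).hasFDerivAt).fderiv
    rw [Function.comp_def] at hc
    rw [DD, this, hc]
    rfl
  rw [expand v w, expand w v, hsymm w v]


section slices
variable {F : Type} [NormedAddCommGroup F] [NormedSpace ℝ F]

lemma fderiv_space {φ : P2 → F} (hφ : Differentiable ℝ φ) (t : ℝ) (x : E2) (v : E2) :
    fderiv ℝ (fun y => φ (t, y)) x v = fderiv ℝ φ (t, x) (0, v) := by
  have h1 : HasFDerivAt (fun y : E2 => ((t, y) : P2)) (ContinuousLinearMap.inr ℝ ℝ E2) x :=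
    hasFDerivAt_prodMk_right t x
  have h2 := ((hφ (t, x)).hasFDerivAt.comp x h1).fderiv
  rw [Function.comp_def] at h2
  rw [h2]; rfl

lemma deriv_time {φ : P2 → F} (hφ : Differentiable ℝ φ) (t : ℝ) (x : E2) :
    deriv (fun τ => φ (τ, x)) t = fderiv ℝ φ (t, x) (1, 0) := by
  have h1 : HasDerivAt (fun τ : ℝ => ((τ, x) : P2)) ((1 : ℝ), (0 : E2)) t :=
    (hasDerivAt_id t).prodMk (hasDerivAt_const t x)
  have h2 := ((hφ (t, x)).hasFDerivAt.comp_hasDerivAt t h1)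
  exact h2.deriv

end slices

lemma gradient_apply' {φ : E2 → ℝ} (x : E2) (v : E2) :
    ⟪gradient φ x, v⟫ = fderiv ℝ φ x v := by
  rw [gradient, InnerProductSpace.toDual_symm_apply]

lemma gradient_comp_i {φ : P2 → ℝ} (hφ : Differentiable ℝ φ) (t : ℝ) (x : E2) (i : Fin 2) :
    gradient (fun y => φ (t, y)) x i = fderiv ℝ φ (t, x) (0, EuclideanSpace.single i 1) := by
  have := gradient_apply' (φ := fun y => φ (t, y)) x (EuclideanSpace.single i 1)
  rw [EuclideanSpace.inner_single_right] at this
  simp only [RCLike.star_def, starRingEnd_apply, star_trivial, one_mul] at this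
  rw [this, fderiv_space hφ]

lemma decomp_v (v : E2) :
    ((0 : ℝ), v) = v 0 • ((0:ℝ), EuclideanSpace.single 0 1)
      + v 1 • ((0:ℝ), EuclideanSpace.single 1 1) := by
  refine Prod.ext (by simp) ?_
  refine PiLp.ext fun j => ?_
  fin_cases j <;> simp [EuclideanSpace.single_apply]

def w0 : P2 := (1, 0)
def w1 : P2 := (0, EuclideanSpace.single 0 1)
def w2 : P2 := (0, EuclideanSpace.single 1 1)

def aU (u : P2 → E2) : P2 → ℝ := fun p => u p 0
def bU (u : P2 → E2) : P2 → ℝ := fun p => u p 1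

lemma contDiff_aU {u : P2 → E2} (hu : ContDiff ℝ (⊤ : ℕ∞) u) : ContDiff ℝ (⊤ : ℕ∞) (aU u) := by
  exact (EuclideanSpace.proj (0 : Fin 2)).contDiff.comp hu

lemma contDiff_bU {u : P2 → E2} (hu : ContDiff ℝ (⊤ : ℕ∞) u) : ContDiff ℝ (⊤ : ℕ∞) (bU u) := by
  exact (EuclideanSpace.proj (1 : Fin 2)).contDiff.comp hu

lemma fderiv_proj {u : P2 → E2} (hu : Differentiable ℝ u) (i : Fin 2) (p v : P2) :
    fderiv ℝ (fun q => u q i) p v = fderiv ℝ u p v i := by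
  have h2 := ((EuclideanSpace.proj (i : Fin 2)).hasFDerivAt.comp p (hu p).hasFDerivAt).fderiv
  rw [Function.comp_def] at h2
  change fderiv ℝ (fun q => (EuclideanSpace.proj i) (u q)) p v = _
  rw [h2]; rfl

lemma DD_sub {φ ψ : P2 → ℝ} (hφ : Differentiable ℝ φ) (hψ : Differentiable ℝ ψ) (v : P2) :
    DD v (fun p => φ p - ψ p) = fun p => DD v φ p - DD v ψ p := by
  funext p
  simp [DD, fderiv_fun_sub (hφ p) (hψ p)]

lemma DD_neg {φ : P2 → ℝ} (v : P2) :
    DD v (fun p => -(φ p)) = fun p => -(DD v φ p) := by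
  funext p
  simp [DD, fderiv_neg]

lemma DD_comp_f {f : ℝ → ℝ} (hf : ContDiff ℝ 1 f) {S : P2 → ℝ} (hS : Differentiable ℝ S)
    (v : P2) : DD v (fun q => f (S q)) = fun p => deriv f (S p) * DD v S p := by
  funext p
  have h1 : HasDerivAt f (deriv f (S p)) (S p) :=
    ((hf.differentiable one_ne_zero) (S p)).hasDerivAt
  have h2 := (h1.comp_hasFDerivAt p (hS p).hasFDerivAt).fderiv
  rw [Function.comp_def] at h2
  simp [DD, h2]

section comps

variable {u : P2 → E2} {g h S : P2 → ℝ}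

/-- Euler equation, components. -/
lemma comp_euler (hu : ContDiff ℝ (⊤ : ℕ∞) u) (hg : ContDiff ℝ (⊤ : ℕ∞) g) (hh : ContDiff ℝ (⊤ : ℕ∞) h)
    (hS : ContDiff ℝ (⊤ : ℕ∞) S)
    (euler : ∀ (t : ℝ) (x : E2),
      deriv (fun τ => u (τ, x)) t + fderiv ℝ (fun y => u (t, y)) x (u (t, x))
        = gradient (fun y => g (t, y)) x + h (t, x) • gradient (fun y => S (t, y)) x)
    (i : Fin 2) :
    ∀ p : P2, fderiv ℝ u p w0 i + aU u p * fderiv ℝ u p w1 i + bU u p * fderiv ℝ u p w2 i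
      = DD (if i = 0 then w1 else w2) g p + h p * DD (if i = 0 then w1 else w2) S p := by
  rintro ⟨t, x⟩
  have hud : Differentiable ℝ u := hu.differentiable (by simp)
  have hgd : Differentiable ℝ g := hg.differentiable (by simp)
  have hSd : Differentiable ℝ S := hS.differentiable (by simp)
  have heq := congrFun (congrArg (fun z : E2 => (z : Fin 2 → ℝ)) (euler t x)) i
  simp only [PiLp.add_apply, PiLp.smul_apply, smul_eq_mul] at heq
  rw [deriv_time hud t x] at heq
  have hsp : fderiv ℝ (fun y => u (t, y)) x (u (t, x)) = fderiv ℝ u (t, x) (0, u (t, x)) :=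
    fderiv_space hud t x (u (t, x))
  rw [hsp, decomp_v (u (t, x)), map_add, map_smul, map_smul] at heq
  simp only [PiLp.add_apply, PiLp.smul_apply, smul_eq_mul] at heq
  rw [gradient_comp_i hgd t x i, gradient_comp_i hSd t x i] at heq
  fin_cases i <;>
    simpa [DD, w0, w1, w2, aU, bU, add_assoc] using heq

/-- Entropy advection, scalar form. -/
lemma comp_entropy (hu : ContDiff ℝ (⊤ : ℕ∞) u) (hS : ContDiff ℝ (⊤ : ℕ∞) S)
    (entropy : ∀ (t : ℝ) (x : E2),
      deriv (fun τ => S (τ, x)) t + ⟪u (t, x), gradient (fun y => S (t, y)) x⟫ = 0) :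
    ∀ p : P2, DD w0 S p + aU u p * DD w1 S p + bU u p * DD w2 S p = 0 := by
  rintro ⟨t, x⟩
  have hSd : Differentiable ℝ S := hS.differentiable (by simp)
  have heq := entropy t x
  rw [deriv_time hSd t x] at heq
  rw [PiLp.inner_apply] at heq
  simp only [Fin.sum_univ_two, RCLike.inner_apply, starRingEnd_apply, star_trivial] at heq
  rw [gradient_comp_i hSd t x 0, gradient_comp_i hSd t x 1] at heq
  simpa [DD, w0, w1, w2, aU, bU, add_assoc, mul_comm] using heq

end comps

def omU (u : P2 → E2) : P2 → ℝ := fun p => DD w1 (bU u) p - DD w2 (aU u) p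

lemma omU_def (u : P2 → E2) (p : P2) : omU u p = DD w1 (bU u) p - DD w2 (aU u) p := rfl

lemma contDiff_omU {u : P2 → E2} (hu : ContDiff ℝ (⊤ : ℕ∞) u) : ContDiff ℝ (⊤ : ℕ∞) (omU u) :=
  (contDiff_DD (contDiff_bU hu) w1).sub (contDiff_DD (contDiff_aU hu) w2)

/-- Expand the directional derivative of an Euler-equation-shaped expression. -/
lemma DD_expand_euler {A B C : P2 → ℝ} (hA : ContDiff ℝ (⊤ : ℕ∞) A) (hB : ContDiff ℝ (⊤ : ℕ∞) B)
    (hC : ContDiff ℝ (⊤ : ℕ∞) C) (v : P2) (p : P2) :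
    DD v (fun q => DD w0 C q + A q * DD w1 C q + B q * DD w2 C q) p
      = DD v (DD w0 C) p + (A p * DD v (DD w1 C) p + DD w1 C p * DD v A p)
        + (B p * DD v (DD w2 C) p + DD w2 C p * DD v B p) := by
  have hAd := hA.differentiable (by simp)
  have hBd := hB.differentiable (by simp)
  have d0 : Differentiable ℝ (DD w0 C) := (contDiff_DD hC w0).differentiable (by simp)
  have d1 : Differentiable ℝ (DD w1 C) := (contDiff_DD hC w1).differentiable (by simp)
  have d2 : Differentiable ℝ (DD w2 C) := (contDiff_DD hC w2).differentiable (by simp)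
  rw [DD_add (d0.fun_add (hAd.fun_mul d1)) (hBd.fun_mul d2), DD_add d0 (hAd.fun_mul d1),
    DD_mul hAd d1, DD_mul hBd d2]

lemma DD_expand_rhs {g h S : P2 → ℝ} (hg : ContDiff ℝ (⊤ : ℕ∞) g) (hh : ContDiff ℝ (⊤ : ℕ∞) h)
    (hS : ContDiff ℝ (⊤ : ℕ∞) S) (w v : P2) (p : P2) :
    DD v (fun q => DD w g q + h q * DD w S q) p
      = DD v (DD w g) p + (h p * DD v (DD w S) p + DD w S p * DD v h p) := by
  have hhd := hh.differentiable (by simp)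
  have dg : Differentiable ℝ (DD w g) := (contDiff_DD hg w).differentiable (by simp)
  have dS : Differentiable ℝ (DD w S) := (contDiff_DD hS w).differentiable (by simp)
  rw [DD_add dg (hhd.fun_mul dS), DD_mul hhd dS]

section vort

variable {u : P2 → E2} {g h S : P2 → ℝ}

lemma vorticity_eq (hu : ContDiff ℝ (⊤ : ℕ∞) u) (hg : ContDiff ℝ (⊤ : ℕ∞) g) (hh : ContDiff ℝ (⊤ : ℕ∞) h)
    (hS : ContDiff ℝ (⊤ : ℕ∞) S)
    (euler : ∀ (t : ℝ) (x : E2),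
      deriv (fun τ => u (τ, x)) t + fderiv ℝ (fun y => u (t, y)) x (u (t, x))
        = gradient (fun y => g (t, y)) x + h (t, x) • gradient (fun y => S (t, y)) x) :
    ∀ p : P2, DD w0 (omU u) p + aU u p * DD w1 (omU u) p + bU u p * DD w2 (omU u) p
        + omU u p * (DD w1 (aU u) p + DD w2 (bU u) p)
      = DD w1 h p * DD w2 S p - DD w2 h p * DD w1 S p := by
  intro p
  have hud := hu.differentiable (by simp)
  have hA : ContDiff ℝ (⊤ : ℕ∞) (aU u) := contDiff_aU hu
  have hB : ContDiff ℝ (⊤ : ℕ∞) (bU u) := contDiff_bU hu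
  -- component Euler equations as function-level identities
  have tr : ∀ (v : P2) (i : Fin 2), DD v (fun q => u q i) p = fderiv ℝ u p v i :=
    fun v i => fderiv_proj hud i p v
  have E1 : (fun q => DD w0 (aU u) q + aU u q * DD w1 (aU u) q + bU u q * DD w2 (aU u) q)
      = fun q => DD w1 g q + h q * DD w1 S q := by
    funext q
    have e := comp_euler hu hg hh hS euler 0 q
    simp only [if_pos rfl] at e
    have r0 : ∀ v, DD v (aU u) q = fderiv ℝ u q v 0 := fun v => fderiv_proj hud 0 q v
    rw [r0 w0, r0 w1, r0 w2]
    exact e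
  have E2 : (fun q => DD w0 (bU u) q + aU u q * DD w1 (bU u) q + bU u q * DD w2 (bU u) q)
      = fun q => DD w2 g q + h q * DD w2 S q := by
    funext q
    have e := comp_euler hu hg hh hS euler 1 q
    simp only [reduceIte] at e
    have r1 : ∀ v, DD v (bU u) q = fderiv ℝ u q v 1 := fun v => fderiv_proj hud 1 q v
    rw [r1 w0, r1 w1, r1 w2]
    exact e
  have h1 : DD w2 (fun q => DD w0 (aU u) q + aU u q * DD w1 (aU u) q + bU u q * DD w2 (aU u) q) p
      = DD w2 (fun q => DD w1 g q + h q * DD w1 S q) p := by rw [E1]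
  have h2 : DD w1 (fun q => DD w0 (bU u) q + aU u q * DD w1 (bU u) q + bU u q * DD w2 (bU u) q) p
      = DD w1 (fun q => DD w2 g q + h q * DD w2 S q) p := by rw [E2]
  rw [DD_expand_euler hA hB hA w2 p, DD_expand_rhs hg hh hS w1 w2 p] at h1
  rw [DD_expand_euler hA hB hB w1 p, DD_expand_rhs hg hh hS w2 w1 p] at h2
  -- normalize the order of second derivatives
  rw [DD_swap hA w2 w0, DD_swap hA w2 w1, DD_swap hg w2 w1, DD_swap hS w2 w1] at h1
  rw [DD_swap hB w1 w0] at h2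
  -- expand derivatives of the vorticity
  have hdb : Differentiable ℝ (DD w1 (bU u)) := (contDiff_DD hB w1).differentiable (by simp)
  have hda : Differentiable ℝ (DD w2 (aU u)) := (contDiff_DD hA w2).differentiable (by simp)
  have homx : ∀ v : P2, DD v (omU u) p = DD v (DD w1 (bU u)) p - DD v (DD w2 (aU u)) p := by
    intro v
    have : omU u = fun q => DD w1 (bU u) q - DD w2 (aU u) q := rfl
    rw [this, DD_sub hdb hda]
  rw [homx w0, homx w1, homx w2, omU_def]
  rw [DD_swap hB w2 w1]
  linear_combination h2 - h1

end vort

def PhiF (u : P2 → E2) (S : P2 → ℝ) (f : ℝ → ℝ) : P2 → ℝ :=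
  fun p => f (S p) * omU u p

def W1F (u : P2 → E2) (h S : P2 → ℝ) (f : ℝ → ℝ) : P2 → ℝ :=
  fun p => -(f (S p) * omU u p * aU u p) + h p * (f (S p) * DD w2 S p)

def W2F (u : P2 → E2) (h S : P2 → ℝ) (f : ℝ → ℝ) : P2 → ℝ :=
  fun p => -(f (S p) * omU u p * bU u p) - h p * (f (S p) * DD w1 S p)

section divid

variable {u : P2 → E2} {g h S : P2 → ℝ} {f : ℝ → ℝ}

lemma div_identity (hu : ContDiff ℝ (⊤ : ℕ∞) u) (hg : ContDiff ℝ (⊤ : ℕ∞) g) (hh : ContDiff ℝ (⊤ : ℕ∞) h)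
    (hS : ContDiff ℝ (⊤ : ℕ∞) S) (hf : ContDiff ℝ 1 f)
    (euler : ∀ (t : ℝ) (x : E2),
      deriv (fun τ => u (τ, x)) t + fderiv ℝ (fun y => u (t, y)) x (u (t, x))
        = gradient (fun y => g (t, y)) x + h (t, x) • gradient (fun y => S (t, y)) x)
    (entropy : ∀ (t : ℝ) (x : E2),
      deriv (fun τ => S (τ, x)) t + ⟪u (t, x), gradient (fun y => S (t, y)) x⟫ = 0) :
    ∀ p : P2, DD w0 (PhiF u S f) p = DD w1 (W1F u h S f) p + DD w2 (W2F u h S f) p := by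
  intro p
  have hud := hu.differentiable (by simp)
  have hSd := hS.differentiable (by simp)
  have hhd := hh.differentiable (by simp)
  have hA : ContDiff ℝ (⊤ : ℕ∞) (aU u) := contDiff_aU hu
  have hB : ContDiff ℝ (⊤ : ℕ∞) (bU u) := contDiff_bU hu
  have hAd := hA.differentiable (by simp)
  have hBd := hB.differentiable (by simp)
  have hom : ContDiff ℝ (⊤ : ℕ∞) (omU u) := contDiff_omU hu
  have homd := hom.differentiable (by simp)
  have hFd : Differentiable ℝ (fun q => f (S q)) :=
    (hf.differentiable one_ne_zero).comp hSd
  have hd1S : Differentiable ℝ (DD w1 S) := (contDiff_DD hS w1).differentiable (by simp)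
  have hd2S : Differentiable ℝ (DD w2 S) := (contDiff_DD hS w2).differentiable (by simp)
  -- expand everything
  have hLphi : PhiF u S f = fun q => f (S q) * omU u q := rfl
  have hLW1 : W1F u h S f
      = fun q => -(f (S q) * omU u q * aU u q) + h q * (f (S q) * DD w2 S q) := rfl
  have hLW2 : W2F u h S f
      = fun q => -(f (S q) * omU u q * bU u q) - h q * (f (S q) * DD w1 S q) := rfl
  rw [hLphi, hLW1, hLW2,
    DD_mul hFd homd w0,
    DD_add (((hFd.fun_mul homd).fun_mul hAd).fun_neg) (hhd.fun_mul (hFd.fun_mul hd2S)) w1,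
    DD_sub (((hFd.fun_mul homd).fun_mul hBd).fun_neg) (hhd.fun_mul (hFd.fun_mul hd1S)) w2,
    DD_neg w1, DD_neg w2,
    DD_mul (hFd.fun_mul homd) hAd w1, DD_mul (hFd.fun_mul homd) hBd w2,
    DD_mul hFd homd w1, DD_mul hFd homd w2,
    DD_mul hhd (hFd.fun_mul hd2S) w1, DD_mul hhd (hFd.fun_mul hd1S) w2,
    DD_mul hFd hd2S w1, DD_mul hFd hd1S w2,
    DD_comp_f hf hSd w0, DD_comp_f hf hSd w1, DD_comp_f hf hSd w2,
    DD_swap hS w2 w1]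
  have hent := comp_entropy hu hS entropy p
  have hvort := vorticity_eq hu hg hh hS euler p
  linear_combination (omU u p * deriv f (S p)) * hent + f (S p) * hvort
end divid

open Filter MeasureTheory in
lemma vanish_fderiv {F : Type} [NormedAddCommGroup F] [NormedSpace ℝ F] {φ : P2 → F}
    (hc : Continuous fun p => fderiv ℝ φ p) {R : ℝ} (hR : 0 < R)
    (h0 : ∀ p : P2, R ≤ ‖p.2‖ → φ p = 0) :
    ∀ p : P2, R ≤ ‖p.2‖ → fderiv ℝ φ p = 0 := by
  have hopen : IsOpen {q : P2 | R < ‖q.2‖} := isOpen_lt continuous_const continuous_snd.norm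
  have hz : ∀ q : P2, R < ‖q.2‖ → fderiv ℝ φ q = 0 := by
    intro q hq
    have hev : φ =ᶠ[nhds q] (fun _ => (0 : F)) :=
      Filter.eventually_of_mem (hopen.mem_nhds hq) fun r hr => h0 r (le_of_lt hr)
    rw [hev.fderiv_eq]
    exact fderiv_const_apply 0
  intro p hp
  set c : ℕ → P2 := fun n => (p.1, (1 + 1/(n+1 : ℝ)) • p.2) with hcdef
  have hnorm : ∀ n : ℕ, R < ‖(c n).2‖ := by
    intro n
    have h1 : (0:ℝ) < 1/(n+1 : ℝ) := by positivity
    have h2 : ‖(1 + 1/(n+1:ℝ)) • p.2‖ = (1 + 1/(n+1:ℝ)) * ‖p.2‖ := by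
      rw [norm_smul, Real.norm_of_nonneg (by linarith)]
    show R < ‖(1 + 1/(n+1:ℝ)) • p.2‖
    rw [h2]
    nlinarith
  have hzn : ∀ n, fderiv ℝ φ (c n) = 0 := fun n => hz _ (hnorm n)
  have hct : Tendsto c atTop (nhds p) := by
    have h1 : Tendsto (fun n : ℕ => (1 + 1/(n+1:ℝ))) atTop (nhds 1) := by
      simpa using tendsto_const_nhds.add (tendsto_one_div_add_atTop_nhds_zero_nat (𝕜 := ℝ))
    have h2 : Tendsto (fun n : ℕ => (1 + 1/(n+1:ℝ)) • p.2) atTop (nhds ((1:ℝ) • p.2)) :=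
      h1.smul tendsto_const_nhds
    rw [one_smul] at h2
    have h3 := (tendsto_const_nhds (x := p.1) (f := atTop (α := ℕ))).prodMk_nhds h2
    rw [Prod.mk.eta] at h3
    exact h3
  have h4 := (hc.tendsto p).comp hct
  have h5 : Tendsto (fun _ : ℕ => (0 : P2 →L[ℝ] F)) atTop (nhds (fderiv ℝ φ p)) := by
    have : (fun p => fderiv ℝ φ p) ∘ c = fun _ : ℕ => (0 : P2 →L[ℝ] F) := by
      funext n; exact hzn n
    rwa [this] at h4
  exact tendsto_nhds_unique h5 tendsto_const_nhds

open Filter MeasureTheory in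
lemma vanish_fderiv_E2 {φ : E2 → ℝ}
    (hc : Continuous fun x => fderiv ℝ φ x) {R : ℝ} (hR : 0 < R)
    (h0 : ∀ x : E2, R ≤ ‖x‖ → φ x = 0) :
    ∀ x : E2, R ≤ ‖x‖ → fderiv ℝ φ x = 0 := by
  have hopen : IsOpen {y : E2 | R < ‖y‖} := isOpen_lt continuous_const continuous_norm
  have hz : ∀ y : E2, R < ‖y‖ → fderiv ℝ φ y = 0 := by
    intro q hq
    have hev : φ =ᶠ[nhds q] (fun _ => (0 : ℝ)) :=
      Filter.eventually_of_mem (hopen.mem_nhds hq) fun r hr => h0 r (le_of_lt hr)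
    rw [hev.fderiv_eq]
    exact fderiv_const_apply 0
  intro p hp
  set c : ℕ → E2 := fun n => (1 + 1/(n+1 : ℝ)) • p with hcdef
  have hnorm : ∀ n : ℕ, R < ‖c n‖ := by
    intro n
    have h1 : (0:ℝ) < 1/(n+1 : ℝ) := by positivity
    have h2 : ‖(1 + 1/(n+1:ℝ)) • p‖ = (1 + 1/(n+1:ℝ)) * ‖p‖ := by
      rw [norm_smul, Real.norm_of_nonneg (by linarith)]
    show R < ‖(1 + 1/(n+1:ℝ)) • p‖
    rw [h2]
    nlinarith
  have hzn : ∀ n, fderiv ℝ φ (c n) = 0 := fun n => hz _ (hnorm n)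
  have hct : Tendsto c atTop (nhds p) := by
    have h1 : Tendsto (fun n : ℕ => (1 + 1/(n+1:ℝ))) atTop (nhds 1) := by
      simpa using tendsto_const_nhds.add (tendsto_one_div_add_atTop_nhds_zero_nat (𝕜 := ℝ))
    have h2 : Tendsto (fun n : ℕ => (1 + 1/(n+1:ℝ)) • p) atTop (nhds ((1:ℝ) • p)) :=
      h1.smul tendsto_const_nhds
    rwa [one_smul] at h2
  have h4 := (hc.tendsto p).comp hct
  have h5 : Tendsto (fun _ : ℕ => (0 : E2 →L[ℝ] ℝ)) atTop (nhds (fderiv ℝ φ p)) := by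
    have : (fun x => fderiv ℝ φ x) ∘ c = fun _ : ℕ => (0 : E2 →L[ℝ] ℝ) := by
      funext n; exact hzn n
    rwa [this] at h4
  exact tendsto_nhds_unique h5 tendsto_const_nhds

open MeasureTheory in
lemma integral_fderiv_dir_zero {ψ : E2 → ℝ} (hψ : ContDiff ℝ 1 ψ) {R : ℝ} (hR : 0 < R)
    (hz : ∀ x : E2, R ≤ ‖x‖ → ψ x = 0) (v : E2) :
    ∫ x : E2, fderiv ℝ ψ x v = 0 := by
  have hψd : Differentiable ℝ ψ := hψ.differentiable one_ne_zero
  have hcs : HasCompactSupport ψ := by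
    refine HasCompactSupport.intro (isCompact_closedBall (0:E2) R) fun x hx => hz x ?_
    simp only [Metric.mem_closedBall, dist_zero_right, not_le] at hx
    exact hx.le
  have hdc : Continuous fun x => fderiv ℝ ψ x v :=
    (ContinuousLinearMap.apply ℝ ℝ v).continuous.comp (hψ.continuous_fderiv one_ne_zero)
  have hdz := vanish_fderiv_E2 (hψ.continuous_fderiv one_ne_zero) hR hz
  have hdcs : HasCompactSupport fun x => fderiv ℝ ψ x v := by
    refine HasCompactSupport.intro (isCompact_closedBall (0:E2) R) fun x hx => ?_
    simp only [Metric.mem_closedBall, dist_zero_right, not_le] at hx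
    rw [hdz x hx.le]; rfl
  have i2 : Integrable (fun x => (1:ℝ) * fderiv ℝ ψ x v) := by
    simpa using hdc.integrable_of_hasCompactSupport hdcs
  have i1 : Integrable (fun x : E2 => fderiv ℝ (fun _ => (1:ℝ)) x v * ψ x) := by
    simpa [fderiv_const] using (integrable_zero E2 ℝ (volume : Measure E2))
  have i3 : Integrable (fun x => (1:ℝ) * ψ x) := by
    simpa using hψ.continuous.integrable_of_hasCompactSupport hcs
  have h1 := integral_mul_fderiv_eq_neg_fderiv_mul_of_integrable
    (μ := (volume : Measure E2)) i1 i2 i3 (fun x _ => differentiableAt_const (1:ℝ)) (fun x _ => hψd x)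
  simpa [fderiv_const] using h1

end ECC
end

open MeasureTheory Metric

/-- Two-dimensional entropy circulation conservation: for non-isentropic planar Euler
flow with suitable spatial decay, `∫ f(S) ϖ d²x` is constant in time. -/
theorem entropy_circulation_conserved_2d
    (u : ℝ × EuclideanSpace ℝ (Fin 2) → EuclideanSpace ℝ (Fin 2))
    (g h S : ℝ × EuclideanSpace ℝ (Fin 2) → ℝ)
    (hu : ContDiff ℝ (⊤ : ℕ∞) u)
    (hg : ContDiff ℝ (⊤ : ℕ∞) g) (hh : ContDiff ℝ (⊤ : ℕ∞) h) (hS : ContDiff ℝ (⊤ : ℕ∞) S)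
    (euler : ∀ (t : ℝ) (x : EuclideanSpace ℝ (Fin 2)),
      deriv (fun τ => u (τ, x)) t + fderiv ℝ (fun y => u (t, y)) x (u (t, x))
        = gradient (fun y => g (t, y)) x + h (t, x) • gradient (fun y => S (t, y)) x)
    (entropy : ∀ (t : ℝ) (x : EuclideanSpace ℝ (Fin 2)),
      deriv (fun τ => S (τ, x)) t + ⟪u (t, x), gradient (fun y => S (t, y)) x⟫ = 0)
    (R : ℝ) (hR : 0 < R)
    (hsupp : ∀ (t : ℝ) (x : EuclideanSpace ℝ (Fin 2)), R ≤ ‖x‖ →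
      u (t, x) = 0 ∧ gradient (fun y => S (t, y)) x = 0) :
    ∀ f : ℝ → ℝ, ContDiff ℝ 1 f →
      ∀ t₁ t₂ : ℝ,
        (∫ x : EuclideanSpace ℝ (Fin 2), f (S (t₁, x)) * vortScalar2 u t₁ x)
          = ∫ x : EuclideanSpace ℝ (Fin 2), f (S (t₂, x)) * vortScalar2 u t₂ x := by
  intro f hf t₁ t₂
  have hud := hu.differentiable (by simp)
  have hSd := hS.differentiable (by simp)
  have hA : ContDiff ℝ (⊤ : ℕ∞) (ECC.aU u) := ECC.contDiff_aU hu
  have hB : ContDiff ℝ (⊤ : ℕ∞) (ECC.bU u) := ECC.contDiff_bU hu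
  have hom : ContDiff ℝ (⊤ : ℕ∞) (ECC.omU u) := ECC.contDiff_omU hu
  set Φ : ECC.P2 → ℝ := ECC.PhiF u S f with hΦdef
  set W1 : ECC.P2 → ℝ := ECC.W1F u h S f with hW1def
  set W2 : ECC.P2 → ℝ := ECC.W2F u h S f with hW2def
  -- the integrand is `Φ`
  have hvort : ∀ (t : ℝ) (x : ECC.E2), f (S (t, x)) * vortScalar2 u t x = Φ (t, x) := by
    intro t x
    have e1 : ECC.DD ECC.w1 (ECC.bU u) (t, x) = fderiv ℝ u (t, x) ECC.w1 1 :=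
      ECC.fderiv_proj hud 1 (t, x) ECC.w1
    have e2 : ECC.DD ECC.w2 (ECC.aU u) (t, x) = fderiv ℝ u (t, x) ECC.w2 0 :=
      ECC.fderiv_proj hud 0 (t, x) ECC.w2
    have h1 : vortScalar2 u t x = ECC.omU u (t, x) := by
      rw [vortScalar2, ECC.fderiv_space hud t x (EuclideanSpace.single 0 1),
        ECC.fderiv_space hud t x (EuclideanSpace.single 1 1), ECC.omU_def, e1, e2]
      rfl
    rw [h1]; rfl
  -- smoothness
  have hF1 : ContDiff ℝ 1 (fun p : ECC.P2 => f (S p)) := hf.comp (hS.of_le (by simp))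
  have hPhi1 : ContDiff ℝ 1 Φ := hF1.mul (hom.of_le (by simp))
  have hPhid : Differentiable ℝ Φ := hPhi1.differentiable one_ne_zero
  have hW11 : ContDiff ℝ 1 W1 :=
    (((hF1.mul (hom.of_le (by simp))).mul (hA.of_le (by simp))).neg).add
      ((hh.of_le (by simp)).mul (hF1.mul ((ECC.contDiff_DD hS ECC.w2).of_le (by simp))))
  have hW21 : ContDiff ℝ 1 W2 :=
    (((hF1.mul (hom.of_le (by simp))).mul (hB.of_le (by simp))).neg).sub
      ((hh.of_le (by simp)).mul (hF1.mul ((ECC.contDiff_DD hS ECC.w1).of_le (by simp))))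
  have hW1d : Differentiable ℝ W1 := hW11.differentiable one_ne_zero
  have hW2d : Differentiable ℝ W2 := hW21.differentiable one_ne_zero
  -- support facts
  have hz_u : ∀ p : ECC.P2, R ≤ ‖p.2‖ → u p = 0 := by
    rintro ⟨t, x⟩ hp; exact (hsupp t x hp).1
  have hz_du := ECC.vanish_fderiv (hu.continuous_fderiv (by simp)) hR hz_u
  have hz_om : ∀ p : ECC.P2, R ≤ ‖p.2‖ → ECC.omU u p = 0 := by
    intro p hp
    have e1 : ECC.DD ECC.w1 (ECC.bU u) p = fderiv ℝ u p ECC.w1 1 :=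
      ECC.fderiv_proj hud 1 p ECC.w1
    have e2 : ECC.DD ECC.w2 (ECC.aU u) p = fderiv ℝ u p ECC.w2 0 :=
      ECC.fderiv_proj hud 0 p ECC.w2
    rw [ECC.omU_def, e1, e2, hz_du p hp]
    simp
  have hz_dS : ∀ p : ECC.P2, R ≤ ‖p.2‖ →
      ECC.DD ECC.w1 S p = 0 ∧ ECC.DD ECC.w2 S p = 0 := by
    rintro ⟨t, x⟩ hp
    have hgrad := (hsupp t x hp).2
    constructor
    · have := ECC.gradient_comp_i hSd t x 0
      rw [hgrad] at this
      rw [show ECC.DD ECC.w1 S (t, x) = fderiv ℝ S (t, x) (0, EuclideanSpace.single 0 1)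
        from rfl, ← this]
      rfl
    · have := ECC.gradient_comp_i hSd t x 1
      rw [hgrad] at this
      rw [show ECC.DD ECC.w2 S (t, x) = fderiv ℝ S (t, x) (0, EuclideanSpace.single 1 1)
        from rfl, ← this]
      rfl
  have hz_Phi : ∀ p : ECC.P2, R ≤ ‖p.2‖ → Φ p = 0 := by
    intro p hp
    show f (S p) * ECC.omU u p = 0
    rw [hz_om p hp, mul_zero]
  have hz_W1 : ∀ p : ECC.P2, R ≤ ‖p.2‖ → W1 p = 0 := by
    intro p hp
    show -(f (S p) * ECC.omU u p * ECC.aU u p)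
        + h p * (f (S p) * ECC.DD ECC.w2 S p) = 0
    rw [hz_om p hp, (hz_dS p hp).2]
    ring
  have hz_W2 : ∀ p : ECC.P2, R ≤ ‖p.2‖ → W2 p = 0 := by
    intro p hp
    show -(f (S p) * ECC.omU u p * ECC.bU u p)
        - h p * (f (S p) * ECC.DD ECC.w1 S p) = 0
    rw [hz_om p hp, (hz_dS p hp).1]
    ring
  have hz_dPhi := ECC.vanish_fderiv (hPhi1.continuous_fderiv one_ne_zero) hR hz_Phi
  -- the divergence identity
  have hdiv := ECC.div_identity hu hg hh hS hf euler entropy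
  -- the integral function
  set I : ℝ → ℝ := fun t => ∫ x : ECC.E2, Φ (t, x) with hIdef
  have key : ∀ t₀ : ℝ, HasDerivAt I 0 t₀ := by
    intro t₀
    -- continuity facts
    have hcont_dPhi : Continuous (fun p : ECC.P2 => ECC.DD ECC.w0 Φ p) :=
      (ContinuousLinearMap.apply ℝ ℝ (ECC.w0 : ECC.P2)).continuous.comp
        (hPhi1.continuous_fderiv one_ne_zero)
    -- dominated derivative
    have hK : IsCompact ((closedBall t₀ 1) ×ˢ (closedBall (0 : ECC.E2) R)) :=
      (isCompact_closedBall _ _).prod (isCompact_closedBall _ _)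
    obtain ⟨C, hC⟩ := hK.exists_bound_of_continuousOn
      (f := fun p : ECC.P2 => ECC.DD ECC.w0 Φ p) hcont_dPhi.continuousOn
    set bound : ECC.E2 → ℝ := (closedBall (0 : ECC.E2) R).indicator (fun _ => C) with hbdef
    have hmain := hasDerivAt_integral_of_dominated_loc_of_deriv_le
      (F := fun τ (x : ECC.E2) => Φ (τ, x))
      (F' := fun τ (x : ECC.E2) => ECC.DD ECC.w0 Φ (τ, x))
      (x₀ := t₀) (bound := bound) (μ := (volume : Measure ECC.E2)) (ball_mem_nhds t₀ one_pos)
      ?_ ?_ ?_ ?_ ?_ ?_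
    · have hval : (∫ x : ECC.E2, ECC.DD ECC.w0 Φ (t₀, x)) = 0 := by
        have hint1 : Integrable (fun x : ECC.E2 => ECC.DD ECC.w1 W1 (t₀, x)) := by
          apply Continuous.integrable_of_hasCompactSupport
          · exact ((ContinuousLinearMap.apply ℝ ℝ (ECC.w1 : ECC.P2)).continuous.comp
              (hW11.continuous_fderiv one_ne_zero)).comp (continuous_const.prodMk continuous_id)
          · refine HasCompactSupport.intro (isCompact_closedBall (0 : ECC.E2) R)
              fun x hx => ?_
            simp only [mem_closedBall, dist_zero_right, not_le] at hx
            have := ECC.vanish_fderiv (hW11.continuous_fderiv one_ne_zero) hR hz_W1 (t₀, x) hx.le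
            show fderiv ℝ W1 (t₀, x) ECC.w1 = 0
            rw [this]; rfl
        have hint2 : Integrable (fun x : ECC.E2 => ECC.DD ECC.w2 W2 (t₀, x)) := by
          apply Continuous.integrable_of_hasCompactSupport
          · exact ((ContinuousLinearMap.apply ℝ ℝ (ECC.w2 : ECC.P2)).continuous.comp
              (hW21.continuous_fderiv one_ne_zero)).comp (continuous_const.prodMk continuous_id)
          · refine HasCompactSupport.intro (isCompact_closedBall (0 : ECC.E2) R)
              fun x hx => ?_
            simp only [mem_closedBall, dist_zero_right, not_le] at hx
            have := ECC.vanish_fderiv (hW21.continuous_fderiv one_ne_zero) hR hz_W2 (t₀, x) hx.le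
            show fderiv ℝ W2 (t₀, x) ECC.w2 = 0
            rw [this]; rfl
        have hIW1 : (∫ x : ECC.E2, ECC.DD ECC.w1 W1 (t₀, x)) = 0 := by
          have hψ : ContDiff ℝ 1 (fun y : ECC.E2 => W1 (t₀, y)) :=
            hW11.comp (contDiff_const.prodMk contDiff_id)
          have h0 := ECC.integral_fderiv_dir_zero hψ hR (fun x hx => hz_W1 (t₀, x) hx)
            (EuclideanSpace.single 0 1)
          rw [← h0]
          congr 1
          funext x
          exact (ECC.fderiv_space hW1d t₀ x (EuclideanSpace.single 0 1)).symm
        have hIW2 : (∫ x : ECC.E2, ECC.DD ECC.w2 W2 (t₀, x)) = 0 := by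
          have hψ : ContDiff ℝ 1 (fun y : ECC.E2 => W2 (t₀, y)) :=
            hW21.comp (contDiff_const.prodMk contDiff_id)
          have h0 := ECC.integral_fderiv_dir_zero hψ hR (fun x hx => hz_W2 (t₀, x) hx)
            (EuclideanSpace.single 1 1)
          rw [← h0]
          congr 1
          funext x
          exact (ECC.fderiv_space hW2d t₀ x (EuclideanSpace.single 1 1)).symm
        calc (∫ x : ECC.E2, ECC.DD ECC.w0 Φ (t₀, x))
            = ∫ x : ECC.E2, (ECC.DD ECC.w1 W1 (t₀, x) + ECC.DD ECC.w2 W2 (t₀, x)) := by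
              congr 1; funext x; exact hdiv (t₀, x)
          _ = (∫ x : ECC.E2, ECC.DD ECC.w1 W1 (t₀, x))
              + ∫ x : ECC.E2, ECC.DD ECC.w2 W2 (t₀, x) := integral_add hint1 hint2
          _ = 0 := by rw [hIW1, hIW2, add_zero]
      rw [← hval]
      exact hmain.2
    · exact Filter.Eventually.of_forall fun τ =>
        (hPhi1.continuous.comp (continuous_const.prodMk continuous_id)).aestronglyMeasurable
    · apply Continuous.integrable_of_hasCompactSupport
      · exact hPhi1.continuous.comp (continuous_const.prodMk continuous_id)
      · refine HasCompactSupport.intro (isCompact_closedBall (0 : ECC.E2) R) fun x hx => ?_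
        simp only [mem_closedBall, dist_zero_right, not_le] at hx
        exact hz_Phi (t₀, x) hx.le
    · exact (hcont_dPhi.comp (continuous_const.prodMk continuous_id)).aestronglyMeasurable
    · refine Filter.Eventually.of_forall fun x => fun τ hτ => ?_
      by_cases hx : x ∈ closedBall (0 : ECC.E2) R
      · rw [hbdef, Set.indicator_of_mem hx]
        exact hC (τ, x) ⟨ball_subset_closedBall hτ, hx⟩
      · rw [hbdef, Set.indicator_of_notMem hx]
        simp only [mem_closedBall, dist_zero_right, not_le] at hx
        have : fderiv ℝ Φ (τ, x) = 0 := hz_dPhi (τ, x) hx.le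
        show ‖fderiv ℝ Φ (τ, x) ECC.w0‖ ≤ 0
        rw [this]
        simp
    · refine (integrableOn_const measure_closedBall_lt_top.ne).integrable_indicator
        measurableSet_closedBall
    · refine Filter.Eventually.of_forall fun x => fun τ hτ => ?_
      have h1 : HasDerivAt (fun σ : ℝ => ((σ, x) : ECC.P2)) ((1 : ℝ), (0 : ECC.E2)) τ :=
        (hasDerivAt_id τ).prodMk (hasDerivAt_const τ x)
      exact (hPhid (τ, x)).hasFDerivAt.comp_hasDerivAt τ h1
  -- conclude
  have hconst := is_const_of_deriv_eq_zero (fun t => (key t).differentiableAt)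
    (fun t => (key t).deriv) t₁ t₂
  have hIeq : ∀ t : ℝ, I t = ∫ x : ECC.E2, f (S (t, x)) * vortScalar2 u t x := by
    intro t
    show (∫ x : ECC.E2, Φ (t, x)) = _
    congr 1; funext x; exact (hvort t x).symm
  rw [← hIeq t₁, ← hIeq t₂]
  exact hconst
end

section
/- (Four-dimensional potential vorticity invariance.) Let u : ℝ × ℝ⁴ → ℝ⁴, ρ : ℝ × ℝ⁴ → ℝ, and h : ℝ × ℝ⁴ → ℝ be smooth with ρ > 0, satisfying ∂ₜu + (u·∇)u = −∇h and ∂ₜρ + div(ρu) = 0 everywhere. Define ω_{ab} = ∂ₐu^b − ∂_bu^a and the vorticity scalar ϖ = ω₁₂ω₃₄ − ω₁₃ω₂₄ + ω₁₄ω₂₃ (the Pfaffian of the matrix (ω_{ab})). Then ϖ/ρ is materially constant: ∂ₜ(ϖ/ρ) + ⟨u, ∇(ϖ/ρ)⟩ = 0 everywhere. -/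
open scoped RealInnerProductSpace

/-- The component `ω_{ab} = ∂ₐu^b − ∂_bu^a` of the curl 2-form of a time-dependent
velocity field on `ℝ⁴`. -/
noncomputable def curlComp4
    (u : ℝ × EuclideanSpace ℝ (Fin 4) → EuclideanSpace ℝ (Fin 4))
    (t : ℝ) (x : EuclideanSpace ℝ (Fin 4)) (a b : Fin 4) : ℝ :=
  fderiv ℝ (fun y => u (t, y)) x (EuclideanSpace.single a 1) b
    - fderiv ℝ (fun y => u (t, y)) x (EuclideanSpace.single b 1) a

/-- The four-dimensional vorticity scalar `ϖ = ω₁₂ω₃₄ − ω₁₃ω₂₄ + ω₁₄ω₂₃`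
(the Pfaffian of the matrix `(ω_{ab})`). -/
noncomputable def vortScalar4
    (u : ℝ × EuclideanSpace ℝ (Fin 4) → EuclideanSpace ℝ (Fin 4))
    (t : ℝ) (x : EuclideanSpace ℝ (Fin 4)) : ℝ :=
  curlComp4 u t x 0 1 * curlComp4 u t x 2 3
    - curlComp4 u t x 0 2 * curlComp4 u t x 1 3
    + curlComp4 u t x 0 3 * curlComp4 u t x 1 2

noncomputable section
abbrev E4 := EuclideanSpace ℝ (Fin 4)
abbrev e4 (a : Fin 4) : E4 := EuclideanSpace.single a 1

variable (u : ℝ × E4 → E4)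

/-- ∂ₐ u^b as a function on spacetime. -/
def Pc (a b : Fin 4) (z : ℝ × E4) : ℝ := fderiv ℝ u z (0, e4 a) b

-- evaluation CLM
def Φ (a b : Fin 4) : ((ℝ × E4) →L[ℝ] E4) →L[ℝ] ℝ :=
  (EuclideanSpace.proj b).comp (ContinuousLinearMap.apply ℝ E4 ((0 : ℝ), e4 a))

theorem Pc_eq (a b : Fin 4) : Pc u a b = fun z => Φ a b (fderiv ℝ u z) := rfl

theorem contDiff_Pc (hu : ContDiff ℝ (⊤ : ℕ∞) u) (a b : Fin 4) : ContDiff ℝ (⊤ : ℕ∞) (Pc u a b) := by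
  rw [Pc_eq]
  exact (Φ a b).contDiff.comp (hu.fderiv_right (by simp))

theorem fderiv_Pc (hu : ContDiff ℝ (⊤ : ℕ∞) u) (a b : Fin 4) (z v : ℝ × E4) :
    fderiv ℝ (Pc u a b) z v = fderiv ℝ (fderiv ℝ u) z v (0, e4 a) b := by
  rw [Pc_eq]
  have h2 : HasFDerivAt (fderiv ℝ u) (fderiv ℝ (fderiv ℝ u) z) z :=
    (((hu.fderiv_right (m := 1) (WithTop.coe_le_coe.mpr le_top)).differentiable one_ne_zero) z).hasFDerivAt
  have : (fun z => Φ a b (fderiv ℝ u z)) = (Φ a b) ∘ (fderiv ℝ u) := rfl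
  rw [this, ((Φ a b).hasFDerivAt.comp z h2).fderiv]
  rfl

theorem decomp (y : E4) : ((0 : ℝ), y) = ∑ c : Fin 4, y c • ((0 : ℝ), e4 c) := by
  have h : y = ∑ c : Fin 4, y c • e4 c := by
    ext i
    rw [WithLp.ofLp_sum, Finset.sum_apply]
    simp [EuclideanSpace.single_apply]
  rw [Prod.ext_iff]
  refine ⟨by simp [Prod.fst_sum], by simpa [Prod.snd_sum] using h⟩

theorem apply_dir (L : (ℝ × E4) →L[ℝ] E4) (y : E4) (b : Fin 4) :
    L (0, y) b = ∑ c : Fin 4, y c * L (0, e4 c) b := by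
  rw [decomp y, map_sum, WithLp.ofLp_sum, Finset.sum_apply]
  refine Finset.sum_congr rfl fun c _ => ?_
  rw [map_smul]
  simp

theorem apply_dir_scalar (L : (ℝ × E4) →L[ℝ] ℝ) (y : E4) :
    L (0, y) = ∑ c : Fin 4, y c * L (0, e4 c) := by
  rw [decomp y, map_sum]
  refine Finset.sum_congr rfl fun c _ => ?_
  rw [map_smul]
  simp

section Slice
variable {F : Type*} [NormedAddCommGroup F] [NormedSpace ℝ F]

theorem slice_fderiv (f : ℝ × E4 → F) (hf : ContDiff ℝ (⊤ : ℕ∞) f) (t : ℝ) (x : E4) (v : E4) :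
    fderiv ℝ (fun y => f (t, y)) x v = fderiv ℝ f (t, x) (0, v) := by
  have h1 : HasFDerivAt (fun y : E4 => (t, y)) (ContinuousLinearMap.inr ℝ ℝ E4) x :=
    hasFDerivAt_prodMk_right t x
  have h2 := ((hf.differentiable (by simp) (t, x)).hasFDerivAt.comp x h1).fderiv
  have h3 : (fun y => f (t, y)) = f ∘ Prod.mk t := rfl
  rw [h3, h2]; rfl

theorem slice_deriv (f : ℝ × E4 → F) (hf : ContDiff ℝ (⊤ : ℕ∞) f) (t : ℝ) (x : E4) :
    HasDerivAt (fun τ => f (τ, x)) (fderiv ℝ f (t, x) (1, 0)) t := by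
  have h1 : HasDerivAt (fun τ : ℝ => (τ, x)) ((1 : ℝ), (0 : E4)) t :=
    (hasDerivAt_id t).prodMk (hasDerivAt_const t x)
  exact (hf.differentiable (by simp) (t, x)).hasFDerivAt.comp_hasDerivAt t h1

theorem symm_snd' (f : ℝ × E4 → F) (hf : ContDiff ℝ (⊤ : ℕ∞) f) (z v w : ℝ × E4) :
    fderiv ℝ (fderiv ℝ f) z v w = fderiv ℝ (fderiv ℝ f) z w v :=
  second_derivative_symmetric (fun y => ((hf.differentiable (by simp)) y).hasFDerivAt)
    ((((hf.fderiv_right (m := 1) (WithTop.coe_le_coe.mpr le_top)).differentiable one_ne_zero) z).hasFDerivAt) v w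

end Slice

theorem grad_comp (g : E4 → ℝ) (x : E4) (b : Fin 4) (_hg : DifferentiableAt ℝ g x) :
    gradient g x b = fderiv ℝ g x (e4 b) := by
  have h1 : gradient g x b = ⟪gradient g x, e4 b⟫ := by
    rw [EuclideanSpace.inner_single_right]; simp
  have h2 : ⟪gradient g x, e4 b⟫ = fderiv ℝ g x (e4 b) := by
    unfold gradient
    exact InnerProductSpace.toDual_symm_apply
  rw [h1, h2]

theorem euler_full (h : ℝ × E4 → ℝ) (hu : ContDiff ℝ (⊤ : ℕ∞) u) (hh : ContDiff ℝ (⊤ : ℕ∞) h)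
    (euler : ∀ (t : ℝ) (x : E4),
      deriv (fun τ => u (τ, x)) t + fderiv ℝ (fun y => u (t, y)) x (u (t, x))
        = -gradient (fun y => h (t, y)) x)
    (z : ℝ × E4) (b : Fin 4) :
    fderiv ℝ u z (1, u z) b = - fderiv ℝ h z (0, e4 b) := by
  obtain ⟨t, x⟩ := z
  have he := euler t x
  have h1 : deriv (fun τ => u (τ, x)) t = fderiv ℝ u (t, x) (1, 0) :=
    (slice_deriv u hu t x).deriv
  have h2 : fderiv ℝ (fun y => u (t, y)) x (u (t, x)) = fderiv ℝ u (t, x) (0, u (t, x)) :=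
    slice_fderiv u hu t x _
  rw [h1, h2] at he
  have h3 : fderiv ℝ u (t, x) (1, 0) + fderiv ℝ u (t, x) (0, u (t, x))
      = fderiv ℝ u (t, x) (1, u (t, x)) := by
    rw [← map_add]
    norm_num
  rw [h3] at he
  have h4 : DifferentiableAt ℝ (fun y => h (t, y)) x :=
    (hh.comp (contDiff_prodMk_right t)).differentiable (by simp) x
  have h5 := congrArg (fun v : E4 => v b) he
  simp only at h5
  rw [h5]
  have h6 : (-gradient (fun y => h (t, y)) x) b = -(gradient (fun y => h (t, y)) x b) := rfl
  rw [h6, grad_comp _ x b h4, slice_fderiv h hh t x]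

def Φs (b : Fin 4) : ((ℝ × E4) →L[ℝ] ℝ) →L[ℝ] ℝ :=
  ContinuousLinearMap.apply ℝ ℝ ((0 : ℝ), e4 b)

theorem proj_apply (b : Fin 4) (v : E4) : EuclideanSpace.proj b v = v b := rfl

theorem fderiv_dh (h : ℝ × E4 → ℝ) (hh : ContDiff ℝ (⊤ : ℕ∞) h) (b : Fin 4) (z v : ℝ × E4) :
    fderiv ℝ (fun w => fderiv ℝ h w ((0 : ℝ), e4 b)) z v
      = fderiv ℝ (fderiv ℝ h) z v ((0 : ℝ), e4 b) := by
  have h2 : HasFDerivAt (fderiv ℝ h) (fderiv ℝ (fderiv ℝ h) z) z :=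
    (((hh.fderiv_right (m := 1) (WithTop.coe_le_coe.mpr le_top)).differentiable one_ne_zero) z).hasFDerivAt
  have h3 : (fun w => fderiv ℝ h w ((0 : ℝ), e4 b)) = (Φs b) ∘ (fderiv ℝ h) := rfl
  rw [h3, ((Φs b).hasFDerivAt.comp z h2).fderiv]
  rfl

theorem matP (h : ℝ × E4 → ℝ) (hu : ContDiff ℝ (⊤ : ℕ∞) u) (hh : ContDiff ℝ (⊤ : ℕ∞) h)
    (euler : ∀ (t : ℝ) (x : E4),
      deriv (fun τ => u (τ, x)) t + fderiv ℝ (fun y => u (t, y)) x (u (t, x))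
        = -gradient (fun y => h (t, y)) x)
    (z : ℝ × E4) (a b : Fin 4) :
    fderiv ℝ (Pc u a b) z (1, u z)
      = - fderiv ℝ (fun w => fderiv ℝ h w ((0 : ℝ), e4 b)) z ((0 : ℝ), e4 a)
        - ∑ c : Fin 4, Pc u a c z * Pc u c b z := by
  have hud : Differentiable ℝ u := hu.differentiable (by simp)
  have hD2 : HasFDerivAt (fderiv ℝ u) (fderiv ℝ (fderiv ℝ u) z) z :=
    (((hu.fderiv_right (m := 1) (WithTop.coe_le_coe.mpr le_top)).differentiable one_ne_zero) z).hasFDerivAt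
  have hv : HasFDerivAt (fun w => ((1 : ℝ), u w))
      ((0 : (ℝ × E4) →L[ℝ] ℝ).prod (fderiv ℝ u z)) z :=
    (hasFDerivAt_const (1 : ℝ) z).prodMk (hud z).hasFDerivAt
  have hG : HasFDerivAt (fun w => fderiv ℝ u w (1, u w))
      ((fderiv ℝ u z).comp ((0 : (ℝ × E4) →L[ℝ] ℝ).prod (fderiv ℝ u z))
        + (fderiv ℝ (fderiv ℝ u) z).flip (1, u z)) z :=
    hD2.clm_apply hv
  have hGb := (EuclideanSpace.proj b).hasFDerivAt.comp z hG
  have hGb' : HasFDerivAt (fun w => fderiv ℝ u w (1, u w) b)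
      ((EuclideanSpace.proj b).comp
        ((fderiv ℝ u z).comp ((0 : (ℝ × E4) →L[ℝ] ℝ).prod (fderiv ℝ u z))
          + (fderiv ℝ (fderiv ℝ u) z).flip (1, u z))) z := hGb
  have heq : (fun w => fderiv ℝ u w (1, u w) b)
      = fun w => -(fderiv ℝ h w ((0 : ℝ), e4 b)) := by
    funext w
    exact euler_full u h hu hh euler w b
  have hfd := hGb'.fderiv
  rw [heq, fderiv_fun_neg] at hfd
  have hval := congrArg (fun L : (ℝ × E4) →L[ℝ] ℝ => L ((0 : ℝ), e4 a)) hfd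
  simp only [ContinuousLinearMap.coe_comp', Function.comp_apply,
    ContinuousLinearMap.add_apply, ContinuousLinearMap.prod_apply,
    ContinuousLinearMap.zero_apply, ContinuousLinearMap.flip_apply,
    ContinuousLinearMap.neg_apply, map_add, proj_apply] at hval
  -- hval : fderiv u z (0, fderiv u z (0,e4 a)) b + D2 z (0,e4 a) (1, u z) b
  --        = -(fderiv (fun w => fderiv h w (0,e4 b)) z (0,e4 a))
  have h1 : fderiv ℝ (Pc u a b) z (1, u z)
      = fderiv ℝ (fderiv ℝ u) z ((0 : ℝ), e4 a) (1, u z) b := by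
    rw [fderiv_Pc u hu a b z (1, u z), symm_snd' u hu z (1, u z) ((0 : ℝ), e4 a)]
  have h2 : fderiv ℝ u z (0, fderiv ℝ u z ((0 : ℝ), e4 a)) b
      = ∑ c : Fin 4, Pc u a c z * Pc u c b z := by
    rw [apply_dir]
    rfl
  rw [h1]
  rw [h2] at hval
  linarith [hval]

def Wc (a b : Fin 4) (z : ℝ × E4) : ℝ := Pc u a b z - Pc u b a z

def Vt (z : ℝ × E4) : ℝ :=
  Wc u 0 1 z * Wc u 2 3 z - Wc u 0 2 z * Wc u 1 3 z + Wc u 0 3 z * Wc u 1 2 z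

theorem contDiff_Wc (hu : ContDiff ℝ (⊤ : ℕ∞) u) (a b : Fin 4) : ContDiff ℝ (⊤ : ℕ∞) (Wc u a b) :=
  (contDiff_Pc u hu a b).sub (contDiff_Pc u hu b a)

theorem contDiff_Vt (hu : ContDiff ℝ (⊤ : ℕ∞) u) : ContDiff ℝ (⊤ : ℕ∞) (Vt u) :=
  (((contDiff_Wc u hu 0 1).mul (contDiff_Wc u hu 2 3)).sub
    ((contDiff_Wc u hu 0 2).mul (contDiff_Wc u hu 1 3))).add
    ((contDiff_Wc u hu 0 3).mul (contDiff_Wc u hu 1 2))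

theorem matW (h : ℝ × E4 → ℝ) (hu : ContDiff ℝ (⊤ : ℕ∞) u) (hh : ContDiff ℝ (⊤ : ℕ∞) h)
    (euler : ∀ (t : ℝ) (x : E4),
      deriv (fun τ => u (τ, x)) t + fderiv ℝ (fun y => u (t, y)) x (u (t, x))
        = -gradient (fun y => h (t, y)) x)
    (z : ℝ × E4) (a b : Fin 4) :
    fderiv ℝ (Wc u a b) z (1, u z)
      = ∑ c : Fin 4, (Pc u b c z * Pc u c a z - Pc u a c z * Pc u c b z) := by
  have hda : DifferentiableAt ℝ (Pc u a b) z :=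
    ((contDiff_Pc u hu a b).differentiable (by simp)) z
  have hdb : DifferentiableAt ℝ (Pc u b a) z :=
    ((contDiff_Pc u hu b a).differentiable (by simp)) z
  have h0 : Wc u a b = fun z => Pc u a b z - Pc u b a z := rfl
  rw [h0, fderiv_fun_sub hda hdb]
  have h1 := matP u h hu hh euler z a b
  have h2 := matP u h hu hh euler z b a
  have h3 : fderiv ℝ (fun w => fderiv ℝ h w ((0 : ℝ), e4 b)) z ((0 : ℝ), e4 a)
      = fderiv ℝ (fun w => fderiv ℝ h w ((0 : ℝ), e4 a)) z ((0 : ℝ), e4 b) := by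
    rw [fderiv_dh h hh b z _, fderiv_dh h hh a z _,
      symm_snd' h hh z ((0 : ℝ), e4 a) ((0 : ℝ), e4 b)]
  simp only [ContinuousLinearMap.sub_apply]
  rw [h1, h2, h3, Finset.sum_sub_distrib]
  ring

theorem matVt (h : ℝ × E4 → ℝ) (hu : ContDiff ℝ (⊤ : ℕ∞) u) (hh : ContDiff ℝ (⊤ : ℕ∞) h)
    (euler : ∀ (t : ℝ) (x : E4),
      deriv (fun τ => u (τ, x)) t + fderiv ℝ (fun y => u (t, y)) x (u (t, x))
        = -gradient (fun y => h (t, y)) x)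
    (z : ℝ × E4) :
    fderiv ℝ (Vt u) z (1, u z) = -(Vt u z * ∑ c : Fin 4, Pc u c c z) := by
  have dW : ∀ a b : Fin 4, DifferentiableAt ℝ (Wc u a b) z := fun a b =>
    ((contDiff_Wc u hu a b).differentiable (by simp)) z
  have h0 : Vt u = fun w =>
      Wc u 0 1 w * Wc u 2 3 w - Wc u 0 2 w * Wc u 1 3 w + Wc u 0 3 w * Wc u 1 2 w := rfl
  rw [h0, fderiv_fun_add (((dW 0 1).fun_mul (dW 2 3)).fun_sub ((dW 0 2).fun_mul (dW 1 3)))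
      ((dW 0 3).fun_mul (dW 1 2)),
    fderiv_fun_sub ((dW 0 1).fun_mul (dW 2 3)) ((dW 0 2).fun_mul (dW 1 3)),
    fderiv_fun_mul (dW 0 1) (dW 2 3), fderiv_fun_mul (dW 0 2) (dW 1 3),
    fderiv_fun_mul (dW 0 3) (dW 1 2)]
  simp only [ContinuousLinearMap.add_apply, ContinuousLinearMap.sub_apply,
    ContinuousLinearMap.smul_apply, smul_eq_mul]
  rw [matW u h hu hh euler z 0 1, matW u h hu hh euler z 2 3, matW u h hu hh euler z 0 2,
    matW u h hu hh euler z 1 3, matW u h hu hh euler z 0 3, matW u h hu hh euler z 1 2]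
  simp only [Fin.sum_univ_four]
  simp only [Wc]
  ring

theorem matRho (ρ : ℝ × E4 → ℝ) (hu : ContDiff ℝ (⊤ : ℕ∞) u) (hρ : ContDiff ℝ (⊤ : ℕ∞) ρ)
    (continuity : ∀ (t : ℝ) (x : E4),
      deriv (fun τ => ρ (τ, x)) t
        + ∑ i : Fin 4,
            fderiv ℝ (fun y => ρ (t, y) • u (t, y)) x (EuclideanSpace.single i 1) i = 0)
    (z : ℝ × E4) :
    fderiv ℝ ρ z (1, u z) = -(ρ z * ∑ c : Fin 4, Pc u c c z) := by
  obtain ⟨t, x⟩ := z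
  have hc := continuity t x
  have hsm : ContDiff ℝ (⊤ : ℕ∞) (fun z : ℝ × E4 => ρ z • u z) := hρ.smul hu
  have h1 : deriv (fun τ => ρ (τ, x)) t = fderiv ℝ ρ (t, x) (1, 0) :=
    (slice_deriv ρ hρ t x).deriv
  have h2 : ∀ i : Fin 4, fderiv ℝ (fun y => ρ (t, y) • u (t, y)) x (EuclideanSpace.single i 1) i
      = ρ (t, x) * Pc u i i (t, x) + fderiv ℝ ρ (t, x) (0, e4 i) * u (t, x) i := by
    intro i
    have h3 : (fun y => ρ (t, y) • u (t, y))
        = fun y => (fun z : ℝ × E4 => ρ z • u z) (t, y) := rfl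
    rw [h3, slice_fderiv _ hsm t x]
    have h4 : HasFDerivAt (fun z : ℝ × E4 => ρ z • u z)
        (ρ (t, x) • fderiv ℝ u (t, x) + (fderiv ℝ ρ (t, x)).smulRight (u (t, x))) (t, x) :=
      ((hρ.differentiable (by simp) (t, x)).hasFDerivAt).smul
        ((hu.differentiable (by simp) (t, x)).hasFDerivAt)
    rw [h4.fderiv]
    simp only [ContinuousLinearMap.add_apply, ContinuousLinearMap.smul_apply,
      ContinuousLinearMap.smulRight_apply]
    have h5 : (ρ (t, x) • fderiv ℝ u (t, x) (0, e4 i)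
        + fderiv ℝ ρ (t, x) (0, e4 i) • u (t, x)) i
        = ρ (t, x) * fderiv ℝ u (t, x) (0, e4 i) i
          + fderiv ℝ ρ (t, x) (0, e4 i) * u (t, x) i := by
      simp [PiLp.add_apply, PiLp.smul_apply, smul_eq_mul]
    exact h5
  rw [h1] at hc
  rw [Finset.sum_congr rfl (fun i _ => h2 i)] at hc
  rw [Finset.sum_add_distrib, ← Finset.mul_sum] at hc
  have h6 : ∑ i : Fin 4, fderiv ℝ ρ (t, x) (0, e4 i) * u (t, x) i
      = fderiv ℝ ρ (t, x) (0, u (t, x)) := by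
    rw [apply_dir_scalar (fderiv ℝ ρ (t, x)) (u (t, x))]
    exact Finset.sum_congr rfl fun i _ => mul_comm _ _
  rw [h6] at hc
  have h7 : fderiv ℝ ρ (t, x) (1, 0) + fderiv ℝ ρ (t, x) (0, u (t, x))
      = fderiv ℝ ρ (t, x) (1, u (t, x)) := by
    rw [← map_add]
    norm_num
  linarith [hc, h7]

theorem inner_grad (f : E4 → ℝ) (x v : E4) : ⟪v, gradient f x⟫ = fderiv ℝ f x v := by
  rw [real_inner_comm]
  unfold gradient
  exact InnerProductSpace.toDual_symm_apply

end

/-- Four-dimensional potential vorticity invariance: for isentropic compressible flow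
in `ℝ⁴`, the Pfaffian vorticity scalar divided by the density is materially constant. -/
theorem potential_vorticity_material_invariance_4d
    (u : ℝ × EuclideanSpace ℝ (Fin 4) → EuclideanSpace ℝ (Fin 4))
    (ρ h : ℝ × EuclideanSpace ℝ (Fin 4) → ℝ)
    (hu : ContDiff ℝ (⊤ : ℕ∞) u) (hρ : ContDiff ℝ (⊤ : ℕ∞) ρ) (hh : ContDiff ℝ (⊤ : ℕ∞) h)
    (hρpos : ∀ (t : ℝ) (x : EuclideanSpace ℝ (Fin 4)), 0 < ρ (t, x))
    (euler : ∀ (t : ℝ) (x : EuclideanSpace ℝ (Fin 4)),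
      deriv (fun τ => u (τ, x)) t + fderiv ℝ (fun y => u (t, y)) x (u (t, x))
        = -gradient (fun y => h (t, y)) x)
    (continuity : ∀ (t : ℝ) (x : EuclideanSpace ℝ (Fin 4)),
      deriv (fun τ => ρ (τ, x)) t
        + ∑ i : Fin 4,
            fderiv ℝ (fun y => ρ (t, y) • u (t, y)) x (EuclideanSpace.single i 1) i = 0) :
    ∀ (t : ℝ) (x : EuclideanSpace ℝ (Fin 4)),
      deriv (fun τ => vortScalar4 u τ x / ρ (τ, x)) t
        + ⟪u (t, x), gradient (fun y => vortScalar4 u t y / ρ (t, y)) x⟫ = 0 := by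
  intro t x
  have hρne : ∀ w : ℝ × E4, ρ w ≠ 0 := fun w => ne_of_gt (hρpos w.1 w.2)
  have hcurl : ∀ (s : ℝ) (y : E4) (a b : Fin 4),
      curlComp4 u s y a b = Wc u a b (s, y) := by
    intro s y a b
    unfold curlComp4 Wc Pc
    rw [slice_fderiv u hu s y (EuclideanSpace.single a 1),
      slice_fderiv u hu s y (EuclideanSpace.single b 1)]
  have hvort : ∀ (s : ℝ) (y : E4), vortScalar4 u s y = Vt u (s, y) := by
    intro s y
    unfold vortScalar4 Vt
    rw [hcurl s y 0 1, hcurl s y 2 3, hcurl s y 0 2, hcurl s y 1 3,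
      hcurl s y 0 3, hcurl s y 1 2]
  set g : ℝ × E4 → ℝ := fun w => Vt u w / ρ w with hgdef
  have hg : ContDiff ℝ (⊤ : ℕ∞) g := (contDiff_Vt u hu).div hρ hρne
  have hmat : fderiv ℝ g (t, x) (1, u (t, x)) = 0 := by
    have hVtρg : Vt u = fun w => ρ w * g w := by
      funext w
      show Vt u w = ρ w * (Vt u w / ρ w)
      rw [← mul_div_assoc, mul_comm, mul_div_assoc, div_self (hρne w), mul_one]
    have hdg : DifferentiableAt ℝ g (t, x) := (hg.differentiable (by simp)) (t, x)
    have hdρ : DifferentiableAt ℝ ρ (t, x) := (hρ.differentiable (by simp)) (t, x)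
    have hmul := fderiv_fun_mul hdρ hdg
    have hVt1 := matVt u h hu hh euler (t, x)
    have hρ1 := matRho u ρ hu hρ continuity (t, x)
    rw [hVtρg] at hVt1
    rw [hmul] at hVt1
    simp only [ContinuousLinearMap.add_apply, ContinuousLinearMap.smul_apply,
      smul_eq_mul] at hVt1
    rw [hρ1] at hVt1
    have hρ0 := hρne (t, x)
    have hz : ρ (t, x) * fderiv ℝ g (t, x) (1, u (t, x)) = 0 := by linear_combination hVt1
    exact (mul_eq_zero.mp hz).resolve_left hρ0
  have h1 : deriv (fun τ => vortScalar4 u τ x / ρ (τ, x)) t = fderiv ℝ g (t, x) (1, 0) := by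
    have he : (fun τ => vortScalar4 u τ x / ρ (τ, x)) = fun τ => g (τ, x) := by
      funext τ
      rw [hgdef, hvort τ x]
    rw [he]
    exact (slice_deriv g hg t x).deriv
  have h2 : ⟪u (t, x), gradient (fun y => vortScalar4 u t y / ρ (t, y)) x⟫
      = fderiv ℝ g (t, x) (0, u (t, x)) := by
    have he : (fun y => vortScalar4 u t y / ρ (t, y)) = fun y => g (t, y) := by
      funext y
      rw [hgdef, hvort t y]
    rw [he, inner_grad, slice_fderiv g hg t x]
  rw [h1, h2, ← map_add]
  have hp : ((1 : ℝ), (0 : E4)) + ((0 : ℝ), u (t, x)) = (1, u (t, x)) := by norm_num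
  rw [hp]
  exact hmat
end
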